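/- arXiv:0904.2342 — 2 statements merged into one kernel-verified Lean document; each statement's English description precedes it below -/
import Mathlib

section
/- (Eulerian exponential formula) Let X be a real Banach space, J : X → X nonexpansive, A = I − J, U_0 ∈ X, and U : [0,∞) → X the differentiable solution of U'(t) = −A(U(t)) with U(0) = U_0. For t ≥ 0 and m ≥ 1 define U_t^m(U_0) = (I − (t/m)A)^m (U_0), i.e. the m-th iterate of the map x ↦ x − (t/m)(x − J(x)) applied to U_0. Then for every m ≥ t, ‖U_t^m(U_0) − U(t)‖ ≤ ‖U_0 − J(U_0)‖ · t/√m. In particular, for every fixed t ≥ 0, (I − (t/m)A)^m(U_0) converges strongly to U(t) as m → ∞. -/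
/-!
With `λ = t / m`, the Euler step `F = (1 - λ) I + λ J` is nonexpansive and the rescaled solution
`W s = U (λ s)` solves `W' = F W - W`. By convexity of the norm, `φ_k s = ‖F^[k] U₀ - W s‖` has
right Dini derivative at most `‖F^[k] U₀ - F (W s)‖ - φ_k s ≤ φ_{k-1} s - φ_k s`.
The function `ψ_k s = √((k - s)² + s)` (`eulerBound k s`) is a supersolution of this recursion,
`ψ_{k-1} ≤ ψ_k + ψ_k'`, and dominates at `s = 0`: `φ_k 0 ≤ k C = C ψ_k 0` for `C = ‖U₀ - F U₀‖`.
A comparison argument, by induction on `k`, gives `φ_k ≤ C ψ_k`.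
At `k = s = m` this reads `‖F^[m] U₀ - U t‖ ≤ λ ‖U₀ - J U₀‖ √m = ‖U₀ - J U₀‖ t / √m`.
-/

open Filter Set Topology

universe u

section Comparison

variable {E : Type u} [NormedAddCommGroup E] [NormedSpace ℝ E] {f : ℝ → E} {f' : E} {x z r : ℝ}

theorem slope_norm_le_norm_add_slope_sub_norm (hxz : x < z) (hzx : z ≤ x + 1) :
    slope (norm ∘ f) x z ≤ ‖f x + slope f x z‖ - ‖f x‖ := by
  have hh : 0 < z - x := sub_pos.2 hxz
  have hconv : f z = (1 - (z - x)) • f x + (z - x) • (f x + slope f x z) := by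
    rw [smul_add, slope_def_module, smul_inv_smul₀ hh.ne']
    module
  have hnorm : ‖f z‖ ≤ (1 - (z - x)) * ‖f x‖ + (z - x) * ‖f x + slope f x z‖ := by
    calc ‖f z‖ ≤ ‖(1 - (z - x)) • f x‖ + ‖(z - x) • (f x + slope f x z)‖ :=
          hconv ▸ norm_add_le _ _
      _ = _ := by
          rw [norm_smul, norm_smul, Real.norm_of_nonneg (by linarith), Real.norm_of_nonneg hh.le]
  rw [slope_def_field, div_le_iff₀ hh, Function.comp_apply, Function.comp_apply]
  linarith

theorem HasDerivWithinAt.eventually_slope_norm_lt (hf : HasDerivWithinAt f f' (Ioi x) x)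
    (hr : ‖f x + f'‖ - ‖f x‖ < r) : ∀ᶠ z in 𝓝[>] x, slope (norm ∘ f) x z < r := by
  have hslope := (hasDerivWithinAt_iff_tendsto_slope' (lt_irrefl x)).1 hf
  have hlim := ((tendsto_const_nhds (x := f x)).add hslope).norm.sub_const ‖f x‖
  filter_upwards [hlim.eventually (gt_mem_nhds hr), self_mem_nhdsWithin,
    Ioc_mem_nhdsGT (lt_add_one x)] with z hz hxz hzx
  exact (slope_norm_le_norm_add_slope_sub_norm hxz hzx.2).trans_lt hz

theorem image_norm_le_of_norm_add_deriv_right_le_deriv_boundary {f f' : ℝ → E} {a b : ℝ}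
    (hf : ContinuousOn f (Icc a b)) (hf' : ∀ x ∈ Ico a b, HasDerivWithinAt f (f' x) (Ioi x) x)
    {B B' : ℝ → ℝ} (ha : ‖f a‖ ≤ B a) (hB : ContinuousOn B (Icc a b))
    (hB' : ∀ x ∈ Ico a b, HasDerivWithinAt B (B' x) (Ici x) x)
    (bound : ∀ x ∈ Ico a b, B x ≤ ‖f x‖ → ‖f x + f' x‖ - ‖f x‖ ≤ B' x) :
    ∀ ⦃x⦄, x ∈ Icc a b → ‖f x‖ ≤ B x := by
  intro x hx
  -- Mathlib's comparison principle needs a strict inequality at contact points.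
  have perturbed : ∀ ε > 0, ‖f x‖ ≤ B x + ε * (x - a) := fun ε hε =>
    image_norm_le_of_liminf_right_slope_norm_lt_deriv_boundary
      (B := fun y => B y + ε * (y - a)) (B' := fun y => B' y + ε) hf
      (fun y hy _ hr => ((hf' y hy).eventually_slope_norm_lt hr).frequently)
      (by simpa using ha) (hB.add (by fun_prop))
      (fun y hy => (hB' y hy).add
        (by simpa using (((hasDerivAt_id y).sub_const a).const_mul ε).hasDerivWithinAt))
      (fun y hy hyB => (bound y hy (by nlinarith [hy.1])).trans_lt (by linarith)) hx
  have hlim : Tendsto (fun ε : ℝ => B x + ε * (x - a)) (𝓝[>] 0) (𝓝 (B x)) := by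
    have hcont : Continuous fun ε : ℝ => B x + ε * (x - a) := by fun_prop
    simpa using (hcont.tendsto 0).mono_left nhdsWithin_le_nhds
  exact ge_of_tendsto hlim (eventually_nhdsWithin_of_forall perturbed)

end Comparison

section EulerBound

noncomputable def eulerBound (a s : ℝ) : ℝ := √((a - s) ^ 2 + s)

variable {a s : ℝ}

theorem eulerBound_pos (ha : 0 < a) (hs : 0 ≤ s) : 0 < eulerBound a s := by
  refine Real.sqrt_pos.2 ?_
  rcases hs.eq_or_lt with rfl | hs <;> positivity

theorem eulerBound_zero_right (ha : 0 ≤ a) : eulerBound a 0 = a := by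
  simp [eulerBound, Real.sqrt_sq ha]

theorem eulerBound_self (a : ℝ) : eulerBound a a = √a := by
  simp [eulerBound]

theorem le_eulerBound_zero_left (hs : 0 ≤ s) : s ≤ eulerBound 0 s :=
  Real.le_sqrt_of_sq_le (by nlinarith)

theorem hasDerivAt_eulerBound (h : 0 < eulerBound a s) :
    HasDerivAt (eulerBound a) ((s - a + 1 / 2) / eulerBound a s) s := by
  have hpoly : HasDerivAt (fun σ => (a - σ) ^ 2 + σ) (2 * (s - a + 1 / 2)) s := by
    refine ((((hasDerivAt_id' s).const_sub a).fun_pow 2).fun_add (hasDerivAt_id' s)).congr_deriv ?_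
    norm_num
    ring
  exact (hpoly.sqrt (Real.sqrt_pos.1 h).ne').congr_deriv (by rw [eulerBound]; field_simp)

theorem eulerBound_le_add_deriv (hs : 0 ≤ s) (h : 0 < eulerBound (a + 1) s) :
    eulerBound a s ≤ eulerBound (a + 1) s + (s - (a + 1) + 1 / 2) / eulerBound (a + 1) s := by
  set q := eulerBound (a + 1) s
  have hq : q ^ 2 = (a + 1 - s) ^ 2 + s := Real.sq_sqrt (Real.sqrt_pos.1 h).le
  set R := q + (s - (a + 1) + 1 / 2) / q
  have hRq : R * q = q ^ 2 + (s - a - 1 / 2) := by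
    simp only [R]; field_simp; ring
  have hR : 0 ≤ R := by
    refine nonneg_of_mul_nonneg_left ?_ h
    rw [hRq, hq]; nlinarith [sq_nonneg (a + 1 / 2 - s)]
  rw [eulerBound, Real.sqrt_le_iff]
  refine ⟨hR, le_of_mul_le_mul_right ?_ (pow_pos h 2)⟩
  -- the gap `(R q)² - ((a - s)² + s) q²` is exactly `(a + 1/2 - s)²`
  calc ((a - s) ^ 2 + s) * q ^ 2 ≤ (R * q) ^ 2 := by
        rw [hRq, hq]; nlinarith [sq_nonneg (a + 1 / 2 - s)]
    _ = R ^ 2 * q ^ 2 := by ring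

end EulerBound

theorem LipschitzWith.norm_iterate_sub_le {E : Type u} [SeminormedAddCommGroup E] {F : E → E}
    (hF : LipschitzWith 1 F) (x : E) (n : ℕ) : ‖F^[n] x - x‖ ≤ n * ‖x - F x‖ := by
  have h := dist_le_range_sum_of_dist_le (f := fun i => F^[i] x) (d := fun _ => dist x (F x)) n
    fun _ => (hF.dist_iterate_succ_le_geometric x _).trans_eq (by simp)
  simpa [dist_eq_norm, norm_sub_rev x] using h

section Trajectory

variable {X : Type u} [NormedAddCommGroup X] [NormedSpace ℝ X] {F : X → X} {W : ℝ → X}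

theorem norm_sub_trajectory_le_of_deriv_boundary
    (hW : ∀ s ≥ 0, HasDerivAt W (F (W s) - W s) s) (c : X)
    {B B' : ℝ → ℝ} (hB : ∀ s ≥ 0, HasDerivAt B (B' s) s) (h0 : ‖c - W 0‖ ≤ B 0)
    (bound : ∀ s ≥ 0, B s ≤ ‖c - W s‖ → ‖c - F (W s)‖ - ‖c - W s‖ ≤ B' s)
    {s : ℝ} (hs : 0 ≤ s) : ‖c - W s‖ ≤ B s := by
  have hf : ∀ σ ≥ 0, HasDerivAt (fun σ => c - W σ) (-(F (W σ) - W σ)) σ :=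
    fun σ hσ => (hW σ hσ).const_sub c
  refine image_norm_le_of_norm_add_deriv_right_le_deriv_boundary
    (fun σ hσ => (hf σ hσ.1).continuousAt.continuousWithinAt)
    (fun σ hσ => (hf σ hσ.1).hasDerivWithinAt) h0
    (fun σ hσ => (hB σ hσ.1).continuousAt.continuousWithinAt)
    (fun σ hσ => (hB σ hσ.1).hasDerivWithinAt) (fun σ hσ hBσ => ?_) ⟨hs, le_rfl⟩
  convert bound σ hσ.1 hBσ using 3
  abel

theorem norm_initial_sub_trajectory_le (hF : LipschitzWith 1 F)
    (hW : ∀ s ≥ 0, HasDerivAt W (F (W s) - W s) s) {s : ℝ} (hs : 0 ≤ s) :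
    ‖W 0 - W s‖ ≤ ‖W 0 - F (W 0)‖ * s := by
  refine norm_sub_trajectory_le_of_deriv_boundary hW (W 0) (B' := fun _ => ‖W 0 - F (W 0)‖)
    (fun s _ => by simpa using (hasDerivAt_id s).const_mul ‖W 0 - F (W 0)‖) (by simp)
    (fun σ _ _ => ?_) hs
  have hFσ : ‖F (W 0) - F (W σ)‖ ≤ ‖W 0 - W σ‖ := by simpa using hF.norm_sub_le (W 0) (W σ)
  linarith [norm_sub_le_norm_sub_add_norm_sub (W 0) (F (W 0)) (F (W σ))]

theorem norm_iterate_sub_trajectory_le (hF : LipschitzWith 1 F)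
    (hW : ∀ s ≥ 0, HasDerivAt W (F (W s) - W s) s) (k : ℕ) {s : ℝ} (hs : 0 ≤ s) :
    ‖F^[k] (W 0) - W s‖ ≤ ‖W 0 - F (W 0)‖ * eulerBound k s := by
  set C := ‖W 0 - F (W 0)‖
  induction k generalizing s with
  | zero =>
    simpa using (norm_initial_sub_trajectory_le hF hW hs).trans
      (mul_le_mul_of_nonneg_left (le_eulerBound_zero_left hs) (norm_nonneg _))
  | succ k ih =>
    rw [Nat.cast_succ]
    have hpos : ∀ σ ≥ 0, 0 < eulerBound (k + 1) σ :=
      fun σ hσ => eulerBound_pos (by positivity) hσ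
    refine norm_sub_trajectory_le_of_deriv_boundary hW _
      (fun σ hσ => (hasDerivAt_eulerBound (hpos σ hσ)).const_mul C) ?_ (fun σ hσ hBσ => ?_) hs
    · rw [eulerBound_zero_right (by positivity)]
      exact (hF.norm_iterate_sub_le (W 0) (k + 1)).trans_eq (by push_cast; ring)
    · have hstep : ‖F^[k + 1] (W 0) - F (W σ)‖ ≤ ‖F^[k] (W 0) - W σ‖ := by
        simpa [Function.iterate_succ_apply'] using hF.norm_sub_le (F^[k] (W 0)) (W σ)
      have hψ := mul_le_mul_of_nonneg_left (eulerBound_le_add_deriv hσ (hpos σ hσ))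
        (norm_nonneg (W 0 - F (W 0)))
      have := ih hσ
      nlinarith

end Trajectory

section EulerStep

variable {X : Type u} [NormedAddCommGroup X] [NormedSpace ℝ X] {J : X → X} {l : ℝ}

def eulerStep (J : X → X) (l : ℝ) (x : X) : X := x - l • (x - J x)

theorem norm_eulerStep_sub (hl : 0 ≤ l) (x : X) :
    ‖x - eulerStep J l x‖ = l * ‖x - J x‖ := by
  rw [eulerStep, sub_sub_cancel, norm_smul, Real.norm_of_nonneg hl]

theorem lipschitzWith_eulerStep (hJ : LipschitzWith 1 J) (hl₀ : 0 ≤ l) (hl₁ : l ≤ 1) :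
    LipschitzWith 1 (eulerStep J l) := by
  refine LipschitzWith.mk_one fun x y => ?_
  have hsplit : eulerStep J l x - eulerStep J l y = (1 - l) • (x - y) + l • (J x - J y) := by
    simp only [eulerStep]; module
  have hJxy : ‖J x - J y‖ ≤ ‖x - y‖ := by simpa using hJ.norm_sub_le x y
  rw [dist_eq_norm, dist_eq_norm, hsplit]
  refine (norm_add_le _ _).trans ?_
  rw [norm_smul, norm_smul, Real.norm_of_nonneg (sub_nonneg.2 hl₁), Real.norm_of_nonneg hl₀]
  nlinarith

theorem hasDerivAt_comp_mul_eulerStep {U : ℝ → X} (hU : ∀ s ≥ 0, HasDerivAt U (J (U s) - U s) s)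
    (hl : 0 ≤ l) (s : ℝ) (hs : 0 ≤ s) :
    HasDerivAt (fun s => U (l * s)) (eulerStep J l (U (l * s)) - U (l * s)) s := by
  have h := (hU (l * s) (mul_nonneg hl hs)).scomp s ((hasDerivAt_id s).const_mul l)
  rw [mul_one] at h
  exact h.congr_deriv (by rw [eulerStep]; module)

theorem norm_eulerStep_iterate_sub_le (hJ : LipschitzWith 1 J) {U : ℝ → X}
    (hU : ∀ s ≥ 0, HasDerivAt U (J (U s) - U s) s) {t : ℝ} (ht : 0 ≤ t) {m : ℕ} (hm : 0 < m)
    (htm : t ≤ m) :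
    ‖(eulerStep J (t / m))^[m] (U 0) - U t‖ ≤ ‖U 0 - J (U 0)‖ * t / √m := by
  have hm' : (0 : ℝ) < m := Nat.cast_pos.2 hm
  have hl₀ : 0 ≤ t / m := by positivity
  have h := norm_iterate_sub_trajectory_le
    (lipschitzWith_eulerStep hJ hl₀ ((div_le_one hm').2 htm))
    (hasDerivAt_comp_mul_eulerStep hU hl₀) m m.cast_nonneg
  rw [mul_zero, div_mul_cancel₀ t hm'.ne', norm_eulerStep_sub hl₀, eulerBound_self] at h
  refine h.trans_eq ?_
  have hsqrt : 0 < √(m : ℝ) := Real.sqrt_pos.2 hm'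
  field_simp
  rw [Real.sq_sqrt hm'.le]
  ring

end EulerStep

theorem eulerian_exponential_formula_general
    {X : Type*} [NormedAddCommGroup X] [NormedSpace ℝ X]
    (J : X → X) (hJ : ∀ x y : X, ‖J x - J y‖ ≤ ‖x - y‖)
    (U₀ : X) (U : ℝ → X)
    (hU : ∀ s ≥ (0 : ℝ), HasDerivAt U (J (U s) - U s) s)
    (hU0 : U 0 = U₀)
    (t : ℝ) (ht : 0 ≤ t) :
    (∀ m : ℕ, 1 ≤ m → t ≤ (m : ℝ) →
      ‖(fun x => x - (t / (m : ℝ)) • (x - J x))^[m] U₀ - U t‖ ≤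
        ‖U₀ - J U₀‖ * t / Real.sqrt m) ∧
    Tendsto (fun m : ℕ => (fun x => x - (t / (m : ℝ)) • (x - J x))^[m] U₀ )
      atTop (nhds (U t)) := by
  subst hU0
  have hJ' : LipschitzWith 1 J := .mk_one fun x y => by simpa only [dist_eq_norm] using hJ x y
  have bound : ∀ m : ℕ, 1 ≤ m → t ≤ (m : ℝ) →
      ‖(eulerStep J (t / m))^[m] (U 0) - U t‖ ≤ ‖U 0 - J (U 0)‖ * t / √m :=
    fun m hm htm => norm_eulerStep_iterate_sub_le hJ' hU ht hm htm
  refine ⟨bound, tendsto_iff_norm_sub_tendsto_zero.2 ?_⟩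
  refine squeeze_zero' (.of_forall fun _ => norm_nonneg _) ?_
    ((tendsto_const_nhds (x := ‖U 0 - J (U 0)‖ * t)).div_atTop
      (Real.tendsto_sqrt_atTop.comp tendsto_natCast_atTop_atTop))
  filter_upwards [eventually_ge_atTop 1, tendsto_natCast_atTop_atTop.eventually_ge_atTop t]
    with m using bound m

/-- Eulerian exponential formula: for a nonexpansive `J`, `A = I - J`,
and `U` the solution of `U' = -A(U)`, `U(0) = U₀`, the Euler iterates
`(I - (t/m)A)^m(U₀)` satisfy `‖(I - (t/m)A)^m(U₀) - U(t)‖ ≤ ‖U₀ - J U₀‖ t/√m`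
whenever `m ≥ t`, and hence converge strongly to `U(t)` as `m → ∞`. -/
theorem eulerian_exponential_formula
    {X : Type*} [NormedAddCommGroup X] [NormedSpace ℝ X] [CompleteSpace X]
    (J : X → X) (hJ : ∀ x y : X, ‖J x - J y‖ ≤ ‖x - y‖)
    (U₀ : X) (U : ℝ → X)
    (hU : ∀ s ≥ (0 : ℝ), HasDerivAt U (J (U s) - U s) s)
    (hU0 : U 0 = U₀)
    (t : ℝ) (ht : 0 ≤ t) :
    (∀ m : ℕ, 1 ≤ m → t ≤ (m : ℝ) →
      ‖(fun x => x - (t / (m : ℝ)) • (x - J x))^[m] U₀ - U t‖ ≤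
        ‖U₀ - J U₀‖ * t / Real.sqrt m) ∧
    Tendsto (fun m : ℕ => (fun x => x - (t / (m : ℝ)) • (x - J x))^[m] U₀ )
      atTop (nhds (U t)) :=
  eulerian_exponential_formula_general J hJ U₀ U hU hU0 t ht
end

section
/- Let X be a real Banach space, J : X → X nonexpansive, and Φ(λ,x) = λ J(((1−λ)/λ) x) for λ ∈ (0,1], with v_λ the unique fixed point of Φ(λ,·). Assume hypothesis (H): there is a constant C ≥ 0 with ‖Φ(λ,x) − Φ(μ,x)‖ ≤ |λ − μ|(C + ‖x‖) for all x ∈ X and λ, μ ∈ (0,1]. Let λ̄ : [0,∞) → (0,1] be continuously differentiable with λ̄'(t)/λ̄(t)² → 0 as t → ∞, and let u : [0,∞) → X be a differentiable solution of u'(t) = Φ(λ̄(t), u(t)) − u(t). Then ‖u(t) − v_{λ̄(t)}‖ → 0 as t → ∞. -/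
/-!
Let `φ t = ‖u t - v (λ̄ t)‖`. The flow pushes `u` towards `Φ(λ̄, u)`, which is `(1 - λ̄)`-closer to
`v_λ̄`, while `λ ↦ v_λ` is `(C + ‖J 0‖) / λ`-Lipschitz; hence the right Dini derivative of `φ` is
at most `-λ̄ φ + (C + ‖J 0‖) |λ̄'| / λ̄`. Once `|λ̄'| ≤ ε λ̄²` this reads `φ' ≤ λ̄ (K - φ)` with
`K = ε (C + ‖J 0‖)`, and `1 / λ̄` grows at most linearly, so `∫ λ̄ = ∞`. Comparing `φ` with the
solution `K + D (a + c t) ^ (-1/c)` of the extremal equation gives `limsup φ ≤ K`; then let `ε → 0`.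
-/

open Filter Set Function Topology

section FixedPoints

variable {X : Type*} [SeminormedAddCommGroup X]

theorem one_sub_mul_norm_sub_le_of_isFixedPt {f g : X → X} {k : ℝ} {x y : X}
    (hf : ‖f x - f y‖ ≤ k * ‖x - y‖) (hx : IsFixedPt f x) (hy : IsFixedPt g y) :
    (1 - k) * ‖x - y‖ ≤ ‖f y - g y‖ := by
  have : ‖x - y‖ ≤ k * ‖x - y‖ + ‖f y - g y‖ := by
    calc ‖x - y‖ = ‖(f x - f y) + (f y - g y)‖ := by rw [hx.eq, hy.eq, sub_add_sub_cancel]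
      _ ≤ ‖f x - f y‖ + ‖f y - g y‖ := norm_add_le _ _
      _ ≤ k * ‖x - y‖ + ‖f y - g y‖ := by gcongr
  linarith

theorem norm_add_smul_sub_sub_le [NormedSpace ℝ X] {f : X → X} {k h : ℝ} {x w : X}
    (hw : IsFixedPt f w) (hfx : ‖f x - f w‖ ≤ k * ‖x - w‖) (h0 : 0 ≤ h) (h1 : h ≤ 1) :
    ‖x + h • (f x - x) - w‖ ≤ (1 - h * (1 - k)) * ‖x - w‖ := by
  have hsplit : x + h • (f x - x) - w = (1 - h) • (x - w) + h • (f x - f w) := by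
    rw [hw.eq]; module
  calc ‖x + h • (f x - x) - w‖ ≤ ‖(1 - h) • (x - w)‖ + ‖h • (f x - f w)‖ := by
        rw [hsplit]; exact norm_add_le _ _
    _ ≤ (1 - h) * ‖x - w‖ + h * (k * ‖x - w‖) := by
        rw [norm_smul, norm_smul, Real.norm_of_nonneg h0, Real.norm_of_nonneg (by linarith)]
        gcongr
    _ = (1 - h * (1 - k)) * ‖x - w‖ := by ring

end FixedPoints

section Slope

variable {X : Type*} [NormedAddCommGroup X] [NormedSpace ℝ X]

theorem slope_norm_sub_le {u w : ℝ → X} {μ : ℝ → ℝ} {t z L a : ℝ} {d : X} (htz : t < z)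
    (hstep : ‖u t + (z - t) • d - w t‖ ≤ (1 - (z - t) * a) * ‖u t - w t‖)
    (hw : ‖w t - w z‖ ≤ L * |μ t - μ z|) :
    slope (fun s => ‖u s - w s‖) t z
      ≤ ‖slope u t z - d‖ + L * |slope μ t z| - a * ‖u t - w t‖ := by
  have hh : 0 < z - t := sub_pos.2 htz
  have hu : ‖u z - u t - (z - t) • d‖ = (z - t) * ‖slope u t z - d‖ := by
    have : u z - u t - (z - t) • d = (z - t) • (slope u t z - d) := by
      rw [slope_def_module, smul_sub, smul_inv_smul₀ hh.ne']
    rw [this, norm_smul, Real.norm_of_nonneg hh.le]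
  have hμ : |μ z - μ t| = (z - t) * |slope μ t z| := by
    rw [slope_def_field, abs_div, abs_of_pos hh, mul_div_cancel₀ _ hh.ne']
  have htriangle : ‖u z - w z‖ ≤ ‖u z - u t - (z - t) • d‖ + ‖u t + (z - t) • d - w t‖
      + ‖w t - w z‖ := by
    have : u z - w z = (u z - u t - (z - t) • d) + (u t + (z - t) • d - w t) + (w t - w z) := by
      abel
    rw [this]; exact norm_add₃_le
  rw [hu] at htriangle
  rw [abs_sub_comm, hμ] at hw
  rw [slope_def_field, div_le_iff₀ hh]
  linarith

theorem eventually_slope_norm_sub_lt {u w : ℝ → X} {μ : ℝ → ℝ} {t L a μ' ρ : ℝ} {d : X}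
    (hu : HasDerivAt u d t) (hμ : HasDerivAt μ μ' t)
    (hstep : ∀ h ∈ Icc (0 : ℝ) 1, ‖u t + h • d - w t‖ ≤ (1 - h * a) * ‖u t - w t‖)
    (hw : ∀ᶠ z in 𝓝[>] t, ‖w t - w z‖ ≤ L * |μ t - μ z|)
    (hρ : L * |μ'| - a * ‖u t - w t‖ < ρ) :
    ∀ᶠ z in 𝓝[>] t, slope (fun s => ‖u s - w s‖) t z < ρ := by
  have hslope_u := (hasDerivAt_iff_tendsto_slope.1 hu).mono_left (nhdsGT_le_nhdsNE t)
  have hslope_μ := (hasDerivAt_iff_tendsto_slope.1 hμ).mono_left (nhdsGT_le_nhdsNE t)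
  have hlim := ((hslope_u.sub_const d).norm.add (hslope_μ.abs.const_mul L)).sub_const
    (a * ‖u t - w t‖)
  rw [sub_self, norm_zero, zero_add] at hlim
  filter_upwards [hlim.eventually_lt_const hρ, hw, Ioo_mem_nhdsGT (lt_add_one t)]
    with z hz hwz htz
  refine (slope_norm_sub_le htz.1 (hstep _ ⟨?_, ?_⟩) hwz).trans_lt hz <;> linarith [htz.1, htz.2]

end Slope

section Comparison

variable {φ lam : ℝ → ℝ} {T a c K : ℝ}

theorem le_add_mul_rpow_of_liminf_slope_right_lt {D : ℝ} (ha : 0 < a) (hc : 0 < c) (hD : 0 < D)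
    (hφ : ContinuousOn φ (Ici T)) (hlam : ∀ x ≥ T, (a + c * (x - T))⁻¹ < lam x)
    (hslope : ∀ x ≥ T, ∀ ρ, lam x * (K - φ x) < ρ → ∃ᶠ z in 𝓝[>] x, slope φ x z < ρ)
    (hT : φ T ≤ K + D * a ^ (-c⁻¹)) :
    ∀ x ≥ T, φ x ≤ K + D * (a + c * (x - T)) ^ (-c⁻¹) := by
  -- With `g x = a + c (x - T)`, the bound `B = K + D g ^ (-1/c)` solves `B' = -(B - K) / g`,
  -- so `1 / g < lam` makes it a strict supersolution of `φ' ≤ lam (K - φ)`.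
  have hg : ∀ x ≥ T, 0 < a + c * (x - T) := fun x hx => by nlinarith
  have hB : ∀ x ≥ T, HasDerivAt (fun x => K + D * (a + c * (x - T)) ^ (-c⁻¹))
      (-(D * (a + c * (x - T)) ^ (-c⁻¹ - 1))) x := by
    intro x hx
    have hlin : HasDerivAt (fun x => a + c * (x - T)) c x := by
      simpa using ((hasDerivAt_id x).sub_const T).const_mul c |>.const_add a
    refine (((hlin.rpow_const (Or.inl (hg x hx).ne')).const_mul D).const_add K).congr_deriv ?_
    rw [mul_neg, mul_inv_cancel₀ hc.ne']
    ring
  intro b hb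
  refine image_le_of_liminf_slope_right_lt_deriv_boundary' (hφ.mono Icc_subset_Ici_self)
    (fun x hx => hslope x hx.1) (by simpa using hT)
    (fun x hx => (hB x hx.1).continuousAt.continuousWithinAt)
    (fun x hx => (hB x hx.1).hasDerivWithinAt) (fun x hx hφx => ?_) ⟨hb, le_rfl⟩
  have hgx := hg x hx.1
  have hpow : 0 < D * (a + c * (x - T)) ^ (-c⁻¹) := mul_pos hD (Real.rpow_pos_of_pos hgx _)
  rw [hφx, Real.rpow_sub_one hgx.ne', mul_div_assoc', div_eq_mul_inv]
  nlinarith [hlam x hx.1]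

theorem eventually_lt_of_liminf_slope_right_lt (ha : 0 < a) (hc : 0 < c)
    (hφ : ContinuousOn φ (Ici T)) (hlam_pos : ∀ x ≥ T, 0 < lam x)
    (hlam : ∀ x ≥ T, (lam x)⁻¹ ≤ a + c * (x - T))
    (hslope : ∀ x ≥ T, ∀ ρ, lam x * (K - φ x) < ρ → ∃ᶠ z in 𝓝[>] x, slope φ x z < ρ) :
    ∀ e > K, ∀ᶠ x in atTop, φ x < e := by
  have ha' : 0 < 2 * a := by positivity
  have hc' : 0 < 2 * c := by positivity
  -- Doubling `a` and `c` makes the lower bound on `lam` strict, as the comparison principle needs.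
  have hlam' : ∀ x ≥ T, (2 * a + 2 * c * (x - T))⁻¹ < lam x := fun x hx =>
    inv_lt_of_inv_lt₀ (hlam_pos x hx)
      ((hlam x hx).trans_lt (by nlinarith [mul_nonneg hc.le (sub_nonneg.2 hx)]))
  set D := max (φ T - K) 0 * (2 * a) ^ (2 * c)⁻¹ + 1
  have hD : 0 < D := by positivity
  have hT : φ T ≤ K + D * (2 * a) ^ (-(2 * c)⁻¹) := by
    have : (2 * a) ^ (2 * c)⁻¹ * (2 * a) ^ (-(2 * c)⁻¹) = 1 := by
      rw [← Real.rpow_add ha', add_neg_cancel, Real.rpow_zero]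
    have : D * (2 * a) ^ (-(2 * c)⁻¹) = max (φ T - K) 0 + (2 * a) ^ (-(2 * c)⁻¹) := by
      simp only [D]; rw [add_mul, mul_assoc, this, mul_one, one_mul]
    rw [this]
    linarith [le_max_left (φ T - K) 0, Real.rpow_pos_of_pos ha' (-(2 * c)⁻¹)]
  have hg : Tendsto (fun x => 2 * a + 2 * c * (x - T)) atTop atTop :=
    tendsto_atTop_add_const_left _ _
      ((tendsto_atTop_add_const_right _ (-T) tendsto_id).const_mul_atTop hc')
  have hlim : Tendsto (fun x => K + D * (2 * a + 2 * c * (x - T)) ^ (-(2 * c)⁻¹)) atTop (𝓝 K) := by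
    simpa using ((tendsto_rpow_neg_atTop (inv_pos.2 hc')).comp hg).const_mul D |>.const_add K
  intro e he
  filter_upwards [hlim.eventually_lt_const he, eventually_ge_atTop T] with x hx hxT
  exact (le_add_mul_rpow_of_liminf_slope_right_lt ha' hc' hD hφ hlam' hslope hT x hxT).trans_lt hx

end Comparison

theorem inv_le_inv_add_mul_of_abs_deriv_le {f f' : ℝ → ℝ} {T ε : ℝ}
    (hf : ∀ s ≥ T, HasDerivAt f (f' s) s) (hne : ∀ s ≥ T, f s ≠ 0)
    (hbound : ∀ s ≥ T, |f' s| ≤ ε * f s ^ 2) :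
    ∀ t ≥ T, (f t)⁻¹ ≤ (f T)⁻¹ + ε * (t - T) := by
  intro t ht
  have hder : ∀ s ∈ Icc T t,
      HasDerivWithinAt (fun s => (f s)⁻¹) (-f' s / f s ^ 2) (Icc T t) s :=
    fun s hs => ((hf s hs.1).inv (hne s hs.1)).hasDerivWithinAt
  have hbd : ∀ s ∈ Icc T t, ‖-f' s / f s ^ 2‖ ≤ ε := fun s hs => by
    rw [norm_div, norm_neg, Real.norm_eq_abs, norm_pow, Real.norm_eq_abs, sq_abs,
      div_le_iff₀ (pow_pos (abs_pos.2 (hne s hs.1)) 2 |>.trans_eq (sq_abs _))]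
    exact hbound s hs.1
  have := (convex_Icc T t).norm_image_sub_le_of_norm_hasDerivWithin_le hder hbd
    (left_mem_Icc.2 ht) (right_mem_Icc.2 ht)
  rw [Real.norm_eq_abs, Real.norm_of_nonneg (sub_nonneg.2 ht)] at this
  linarith [le_abs_self ((f t)⁻¹ - (f T)⁻¹)]

theorem eventually_abs_le_mul_sq_of_tendsto_div_sq {α : Type*} {l : Filter α} {f f' : α → ℝ}
    (h : Tendsto (fun t => f' t / f t ^ 2) l (𝓝 0)) (hf : ∀ᶠ t in l, f t ≠ 0) {ε : ℝ}
    (hε : 0 < ε) : ∀ᶠ t in l, |f' t| ≤ ε * f t ^ 2 := by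
  filter_upwards [h.abs.eventually (gt_mem_nhds (by simpa using hε)), hf] with t ht hft
  have hpos := pow_pos (abs_pos.2 hft) 2
  rw [sq_abs] at hpos
  rw [abs_div, abs_of_pos hpos, div_lt_iff₀ hpos] at ht
  exact ht.le

section Phi

variable {X : Type*} [NormedAddCommGroup X] [NormedSpace ℝ X] {J : X → X}

noncomputable def Phi (J : X → X) (lam : ℝ) (x : X) : X := lam • J (((1 - lam) / lam) • x)

theorem norm_Phi_sub_Phi_le (hJ : ∀ x y : X, ‖J x - J y‖ ≤ ‖x - y‖) {lam : ℝ}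
    (hlam : lam ∈ Ioc (0 : ℝ) 1) (x y : X) :
    ‖Phi J lam x - Phi J lam y‖ ≤ (1 - lam) * ‖x - y‖ := by
  obtain ⟨hpos, hle⟩ := hlam
  have hc : 0 ≤ (1 - lam) / lam := div_nonneg (by linarith) hpos.le
  calc ‖Phi J lam x - Phi J lam y‖
      = lam * ‖J (((1 - lam) / lam) • x) - J (((1 - lam) / lam) • y)‖ := by
        rw [Phi, Phi, ← smul_sub, norm_smul, Real.norm_of_nonneg hpos.le]
    _ ≤ lam * ‖((1 - lam) / lam) • x - ((1 - lam) / lam) • y‖ := by gcongr; exact hJ _ _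
    _ = (1 - lam) * ‖x - y‖ := by
        rw [← smul_sub, norm_smul, Real.norm_of_nonneg hc, ← mul_assoc,
          mul_div_cancel₀ _ hpos.ne']

theorem norm_le_of_isFixedPt_Phi (hJ : ∀ x y : X, ‖J x - J y‖ ≤ ‖x - y‖) {lam : ℝ}
    (hlam : lam ∈ Ioc (0 : ℝ) 1) {w : X} (hw : IsFixedPt (Phi J lam) w) : ‖w‖ ≤ ‖J 0‖ := by
  have hPhi0 : ‖Phi J lam 0‖ = lam * ‖J 0‖ := by
    rw [Phi, smul_zero, norm_smul, Real.norm_of_nonneg hlam.1.le]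
  have key : ‖w‖ ≤ (1 - lam) * ‖w‖ + lam * ‖J 0‖ := by
    calc ‖w‖ = ‖(Phi J lam w - Phi J lam 0) + Phi J lam 0‖ := by rw [sub_add_cancel, hw.eq]
      _ ≤ ‖Phi J lam w - Phi J lam 0‖ + ‖Phi J lam 0‖ := norm_add_le _ _
      _ ≤ (1 - lam) * ‖w - 0‖ + lam * ‖J 0‖ := by
          rw [hPhi0]; gcongr; exact norm_Phi_sub_Phi_le hJ hlam w 0
      _ = (1 - lam) * ‖w‖ + lam * ‖J 0‖ := by rw [sub_zero]
  exact le_of_mul_le_mul_left (by linarith) hlam.1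

variable {C : ℝ} {v : ℝ → X}
    (hJ : ∀ x y : X, ‖J x - J y‖ ≤ ‖x - y‖)
    (hv : ∀ lam ∈ Ioc (0 : ℝ) 1, IsFixedPt (Phi J lam) (v lam))
    (hH : ∀ (x : X), ∀ lam ∈ Ioc (0 : ℝ) 1, ∀ mu ∈ Ioc (0 : ℝ) 1,
      ‖Phi J lam x - Phi J mu x‖ ≤ |lam - mu| * (C + ‖x‖))
include hJ hv hH

theorem norm_fixedPoint_sub_le {lam mu : ℝ} (hlam : lam ∈ Ioc (0 : ℝ) 1)
    (hmu : mu ∈ Ioc (0 : ℝ) 1) :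
    ‖v lam - v mu‖ ≤ (C + ‖J 0‖) / lam * |lam - mu| := by
  have key := one_sub_mul_norm_sub_le_of_isFixedPt
    (norm_Phi_sub_Phi_le hJ hlam (v lam) (v mu)) (hv lam hlam) (hv mu hmu)
  rw [sub_sub_cancel] at key
  have hbound : ‖Phi J lam (v mu) - Phi J mu (v mu)‖ ≤ |lam - mu| * (C + ‖J 0‖) :=
    (hH _ lam hlam mu hmu).trans (by gcongr; exact norm_le_of_isFixedPt_Phi hJ hmu (hv mu hmu))
  rw [div_mul_eq_mul_div, le_div_iff₀ hlam.1]
  linarith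

theorem continuousOn_fixedPoint : ContinuousOn v (Ioc 0 1) := by
  intro lam hlam
  rw [ContinuousWithinAt, tendsto_iff_norm_sub_tendsto_zero]
  have hlim : Tendsto (fun mu => (C + ‖J 0‖) / lam * |lam - mu|) (𝓝[Ioc 0 1] lam) (𝓝 0) := by
    have : Continuous fun mu => (C + ‖J 0‖) / lam * |lam - mu| := by fun_prop
    simpa using (this.tendsto lam).mono_left nhdsWithin_le_nhds
  refine squeeze_zero' (Eventually.of_forall fun _ => norm_nonneg _)
    (eventually_nhdsWithin_of_forall fun mu hmu => ?_) hlim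
  rw [norm_sub_rev]
  exact norm_fixedPoint_sub_le hJ hv hH hlam hmu

theorem frequently_slope_norm_sub_fixedPoint_lt (hC : 0 ≤ C) {lamb : ℝ → ℝ} {u : ℝ → X}
    {t lam' ε ρ : ℝ} (hlamb : ∀ s ≥ t, lamb s ∈ Ioc (0 : ℝ) 1) (hlambd : HasDerivAt lamb lam' t)
    (hslow : |lam'| ≤ ε * lamb t ^ 2) (hu : HasDerivAt u (Phi J (lamb t) (u t) - u t) t)
    (hρ : lamb t * ((C + ‖J 0‖) * ε - ‖u t - v (lamb t)‖) < ρ) :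
    ∃ᶠ z in 𝓝[>] t, slope (fun s => ‖u s - v (lamb s)‖) t z < ρ := by
  have hlt := hlamb t le_rfl
  have hL : 0 ≤ (C + ‖J 0‖) / lamb t := div_nonneg (add_nonneg hC (norm_nonneg _)) hlt.1.le
  refine (eventually_slope_norm_sub_lt (w := fun s => v (lamb s)) (L := (C + ‖J 0‖) / lamb t)
    (a := lamb t) hu hlambd (fun h hh => ?_) ?_ (hρ.trans_le' ?_)).frequently
  · simpa only [sub_sub_cancel] using
      norm_add_smul_sub_sub_le (hv _ hlt) (norm_Phi_sub_Phi_le hJ hlt _ _) hh.1 hh.2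
  · filter_upwards [self_mem_nhdsWithin] with z hz
    exact norm_fixedPoint_sub_le hJ hv hH hlt (hlamb z (le_of_lt hz))
  · calc (C + ‖J 0‖) / lamb t * |lam'| - lamb t * ‖u t - v (lamb t)‖
        ≤ (C + ‖J 0‖) / lamb t * (ε * lamb t ^ 2) - lamb t * ‖u t - v (lamb t)‖ := by
          gcongr
      _ = lamb t * ((C + ‖J 0‖) * ε - ‖u t - v (lamb t)‖) := by
          field_simp [hlt.1.ne']

end Phi

theorem slow_parametrization_tracks_vlambda_general
    {X : Type*} [NormedAddCommGroup X] [NormedSpace ℝ X]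
    (J : X → X) (hJ : ∀ x y : X, ‖J x - J y‖ ≤ ‖x - y‖)
    (v : ℝ → X)
    (hv : ∀ lam ∈ Set.Ioc (0 : ℝ) 1,
      lam • J (((1 - lam) / lam) • v lam) = v lam)
    (C : ℝ) (hC : 0 ≤ C)
    (hH : ∀ (x : X), ∀ lam ∈ Set.Ioc (0 : ℝ) 1, ∀ mu ∈ Set.Ioc (0 : ℝ) 1,
      ‖lam • J (((1 - lam) / lam) • x) - mu • J (((1 - mu) / mu) • x)‖ ≤
        |lam - mu| * (C + ‖x‖))
    (lamb lamb' : ℝ → ℝ)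
    (hlamb : ∀ t ≥ (0 : ℝ), lamb t ∈ Set.Ioc (0 : ℝ) 1)
    (hlambd : ∀ t ≥ (0 : ℝ), HasDerivAt lamb (lamb' t) t)
    (hslow : Tendsto (fun t : ℝ => lamb' t / (lamb t) ^ 2) atTop (nhds 0))
    (u : ℝ → X)
    (hu : ∀ t ≥ (0 : ℝ),
      HasDerivAt u (lamb t • J (((1 - lamb t) / lamb t) • u t) - u t) t) :
    Tendsto (fun t : ℝ => ‖u t - v (lamb t)‖) atTop (nhds 0) := by
  have hvc : ContinuousOn (fun t => v (lamb t)) (Ici 0) :=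
    (continuousOn_fixedPoint hJ hv hH).comp
      (fun t ht => (hlambd t ht).continuousAt.continuousWithinAt) hlamb
  have huc : ContinuousOn u (Ici 0) := fun t ht => (hu t ht).continuousAt.continuousWithinAt
  have hφc : ContinuousOn (fun t => ‖u t - v (lamb t)‖) (Ici 0) := (huc.sub hvc).norm
  refine tendsto_order.2 ⟨fun a ha => Eventually.of_forall fun t => ha.trans_le (norm_nonneg _),
    fun e he => ?_⟩
  obtain ⟨ε, hε, hεe⟩ := exists_pos_mul_lt he (C + ‖J 0‖)
  have hslowT := eventually_abs_le_mul_sq_of_tendsto_div_sq hslow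
    ((eventually_ge_atTop 0).mono fun t ht => (hlamb t ht).1.ne') hε
  obtain ⟨T, hT⟩ := eventually_atTop.1 (hslowT.and (eventually_ge_atTop 0))
  have hT0 : 0 ≤ T := (hT T le_rfl).2
  have hpos : ∀ x ≥ T, 0 < lamb x := fun x hx => (hlamb x (hT0.trans hx)).1
  have hinv := inv_le_inv_add_mul_of_abs_deriv_le (fun s hs => hlambd s (hT0.trans hs))
    (fun s hs => (hpos s hs).ne') fun s hs => (hT s hs).1
  refine eventually_lt_of_liminf_slope_right_lt (inv_pos.2 (hpos T le_rfl)) hε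
    (hφc.mono (Ici_subset_Ici.2 hT0)) hpos hinv (fun x hx ρ hρ => ?_) e hεe
  have hx0 := hT0.trans hx
  exact frequently_slope_norm_sub_fixedPoint_lt hJ hv hH hC (fun s hs => hlamb s (hx0.trans hs))
    (hlambd x hx0) (hT x hx).1 (hu x hx0) hρ

/-- under hypothesis (H), if the C¹ parametrization
`λ̄ : [0,∞) → (0,1]` satisfies `λ̄'(t)/λ̄(t)² → 0` as `t → ∞`, then any solution `u`
of `u'(t) = Φ(λ̄(t),u(t)) - u(t)` satisfies `‖u(t) - v_{λ̄(t)}‖ → 0`, where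
`Φ(λ,x) = λ J(((1-λ)/λ)x)` and `v_λ` is its unique fixed point. -/
theorem slow_parametrization_tracks_vlambda
    {X : Type*} [NormedAddCommGroup X] [NormedSpace ℝ X] [CompleteSpace X]
    (J : X → X) (hJ : ∀ x y : X, ‖J x - J y‖ ≤ ‖x - y‖)
    (v : ℝ → X)
    (hv : ∀ lam ∈ Set.Ioc (0 : ℝ) 1,
      lam • J (((1 - lam) / lam) • v lam) = v lam)
    (C : ℝ) (hC : 0 ≤ C)
    (hH : ∀ (x : X), ∀ lam ∈ Set.Ioc (0 : ℝ) 1, ∀ mu ∈ Set.Ioc (0 : ℝ) 1,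
      ‖lam • J (((1 - lam) / lam) • x) - mu • J (((1 - mu) / mu) • x)‖ ≤
        |lam - mu| * (C + ‖x‖))
    (lamb lamb' : ℝ → ℝ)
    (hlamb : ∀ t ≥ (0 : ℝ), lamb t ∈ Set.Ioc (0 : ℝ) 1)
    (hlambd : ∀ t ≥ (0 : ℝ), HasDerivAt lamb (lamb' t) t)
    (hlambd' : ContinuousOn lamb' (Set.Ici (0 : ℝ)))
    (hslow : Tendsto (fun t : ℝ => lamb' t / (lamb t) ^ 2) atTop (nhds 0))
    (u : ℝ → X)
    (hu : ∀ t ≥ (0 : ℝ),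
      HasDerivAt u (lamb t • J (((1 - lamb t) / lamb t) • u t) - u t) t) :
    Tendsto (fun t : ℝ => ‖u t - v (lamb t)‖) atTop (nhds 0) :=
  slow_parametrization_tracks_vlambda_general J hJ v hv C hC hH lamb lamb' hlamb hlambd hslow u hu
end
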